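/- Let μ ≠ 0 with |μ| ≤ 1 and Φ(z) = μz. For a positive integer m, the composition operator C_Φ on H_E(ξ) is an m-isometry (i.e., Σ_{k=0}^m (−1)^{m−k} C(m,k) (C_Φ*)^k C_Φ^k = 0) if and only if C_Φ is an isometry, i.e., if and only if |μ| = 1. -/

import Mathlib

/-!
`C_Φ` multiplies the `n`-th Taylor coefficient by `μ ^ n`. If `‖μ‖ = 1` it therefore preserves the
inner product of `H_E(ξ)`, so every term of the `m`-isometry sum is `⟨f, g⟩` and the sum is
`(1 - 1) ^ m ⟨f, g⟩ = 0`. Conversely, testing on `f = g = z`, whose only coefficient is the first,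
gives `⟨C_Φ^k z, C_Φ^k z⟩ = ‖μ‖ ^ (2k) ξ₁²`, so the `m`-isometry sum is `(‖μ‖² - 1) ^ m ξ₁²`, while
the isometry condition reads `‖μ‖² ξ₁² = ξ₁²`.
-/

noncomputable section

open Filter

/-- `n`-th Taylor coefficient of `f` at `0`. -/
def heCoeff (f : ℂ → ℂ) (n : ℕ) : ℂ := iteratedDeriv n f 0 / (n.factorial : ℂ)

/-- Membership in the weighted Hardy space of entire functions `H_E(ξ)`. -/
def MemHE (ξ : ℕ → ℝ) (f : ℂ → ℂ) : Prop :=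
  Differentiable ℂ f ∧ Summable (fun n => ‖heCoeff f n‖ ^ 2 * (ξ n) ^ 2)

/-- Squared norm in `H_E(ξ)`. -/
def heNormSq (ξ : ℕ → ℝ) (f : ℂ → ℂ) : ℝ := ∑' n, ‖heCoeff f n‖ ^ 2 * (ξ n) ^ 2

/-- Inner product in `H_E(ξ)`. -/
def heInner (ξ : ℕ → ℝ) (f g : ℂ → ℂ) : ℂ :=
  ∑' n, heCoeff f n * (starRingEnd ℂ) (heCoeff g n) * ((ξ n : ℂ)) ^ 2

/-- `ξ` is an admissible weight sequence: positive with `ξ n ^ (1/n) → ∞`. -/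
def HEWeight (ξ : ℕ → ℝ) : Prop :=
  (∀ n, 0 < ξ n) ∧ Tendsto (fun n : ℕ => (ξ n) ^ ((1 : ℝ) / n)) atTop atTop

/-- An operator on functions is an isometry of `H_E(ξ)`. -/
def IsIsometryHE (ξ : ℕ → ℝ) (T : (ℂ → ℂ) → (ℂ → ℂ)) : Prop :=
  (∀ f, MemHE ξ f → MemHE ξ (T f)) ∧ ∀ f, MemHE ξ f → heNormSq ξ (T f) = heNormSq ξ f

/-- Unitary: an isometry of `H_E(ξ)` mapping `H_E(ξ)` onto itself. -/
def IsUnitaryHE (ξ : ℕ → ℝ) (T : (ℂ → ℂ) → (ℂ → ℂ)) : Prop :=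
  IsIsometryHE ξ T ∧ ∀ g, MemHE ξ g → ∃ f, MemHE ξ f ∧ T f = g

/-- Composition operator `C_Φ f = f ∘ Φ`. -/
def compOp (Φ : ℂ → ℂ) : (ℂ → ℂ) → (ℂ → ℂ) := fun f => f ∘ Φ

/-- Weighted composition operator `C_{Υ,Φ} f = Υ · (f ∘ Φ)`. -/
def wCompOp (Υ Φ : ℂ → ℂ) : (ℂ → ℂ) → (ℂ → ℂ) := fun f z => Υ z * f (Φ z)

/-- Reproducing kernel `K_p(z) = ∑ conj(p)^n z^n / ξ_n²`. -/
def heKernel (ξ : ℕ → ℝ) (p : ℂ) : ℂ → ℂ :=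
  fun z => ∑' n, (starRingEnd ℂ p) ^ n * z ^ n / ((ξ n : ℂ)) ^ 2

/-- Boundedness of an operator on `H_E(ξ)`. -/
def IsBoundedHE (ξ : ℕ → ℝ) (T : (ℂ → ℂ) → (ℂ → ℂ)) : Prop :=
  ∃ M > (0 : ℝ), ∀ f, MemHE ξ f → MemHE ξ (T f) ∧
    Real.sqrt (heNormSq ξ (T f)) ≤ M * Real.sqrt (heNormSq ξ f)

/-- Generalized weighted composition operator `D^p_{Φ,Υ} f = Υ · (f^{(p)} ∘ Φ)`. -/
def genWComp (p : ℕ) (Φ Υ : ℂ → ℂ) : (ℂ → ℂ) → (ℂ → ℂ) :=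
  fun f z => Υ z * iteratedDeriv p f (Φ z)

/-- `T` is an `m`-isometry on `H_E(ξ)`:
`∑ₖ (-1)^{m-k} C(m,k) ⟨T^k f, T^k g⟩ = 0` for all `f, g ∈ H_E(ξ)`
(equivalently `∑ₖ (-1)^{m-k} C(m,k) T*^k T^k = 0`). -/
def IsMIsometryHE (ξ : ℕ → ℝ) (T : (ℂ → ℂ) → (ℂ → ℂ)) (m : ℕ) : Prop :=
  ∀ f g, MemHE ξ f → MemHE ξ g →
    ∑ k ∈ Finset.range (m + 1),
      ((-1 : ℂ)) ^ (m - k) * (m.choose k : ℂ) * heInner ξ (T^[k] f) (T^[k] g) = 0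

open ComplexConjugate

lemma sum_neg_one_pow_mul_choose_mul_pow_mul {R : Type*} [CommRing R] (x c : R) (m : ℕ) :
    ∑ k ∈ Finset.range (m + 1), (-1 : R) ^ (m - k) * (m.choose k : R) * (x ^ k * c)
      = (x - 1) ^ m * c := by
  rw [sub_eq_add_neg, add_pow, Finset.sum_mul]
  refine Finset.sum_congr rfl fun k _ => ?_
  ring

lemma heCoeff_comp_const_mul {f : ℂ → ℂ} (hf : Differentiable ℂ f) (c : ℂ) (n : ℕ) :
    heCoeff (fun z => f (c * z)) n = c ^ n * heCoeff f n := by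
  simp only [heCoeff, iteratedDeriv_comp_const_mul hf.contDiff c, mul_zero, mul_div_assoc]

lemma heCoeff_const_mul_id (c : ℂ) (n : ℕ) :
    heCoeff (fun z => c * z) n = if n = 1 then c else 0 := by
  rw [heCoeff_comp_const_mul (f := fun z => z) differentiable_id c, heCoeff,
    iteratedDeriv_fun_id_zero]
  split_ifs with h <;> simp [h]

lemma memHE_const_mul_id (ξ : ℕ → ℝ) (c : ℂ) : MemHE ξ (fun z => c * z) := by
  refine ⟨differentiable_id.const_mul c, summable_of_ne_finset_zero (s := {1}) fun n hn => ?_⟩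
  simp [heCoeff_const_mul_id, Finset.mem_singleton.not.mp hn]

lemma heInner_const_mul_id (ξ : ℕ → ℝ) (c d : ℂ) :
    heInner ξ (fun z => c * z) (fun z => d * z) = c * conj d * (ξ 1 : ℂ) ^ 2 := by
  rw [heInner, tsum_eq_single 1 fun n hn => by simp [heCoeff_const_mul_id, hn]]
  simp [heCoeff_const_mul_id]

lemma heNormSq_const_mul_id (ξ : ℕ → ℝ) (c : ℂ) :
    heNormSq ξ (fun z => c * z) = ‖c‖ ^ 2 * ξ 1 ^ 2 := by
  rw [heNormSq, tsum_eq_single 1 fun n hn => by simp [heCoeff_const_mul_id, hn]]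
  simp [heCoeff_const_mul_id]

lemma compOp_const_mul_iterate (μ : ℂ) (f : ℂ → ℂ) (k : ℕ) :
    (compOp (fun z => μ * z))^[k] f = fun z => f (μ ^ k * z) := by
  induction k with
  | zero => simp
  | succ k ih =>
    rw [Function.iterate_succ_apply', ih]
    funext z
    simp only [compOp, Function.comp_apply, pow_succ, mul_assoc]

lemma norm_heCoeff_comp_const_mul {f : ℂ → ℂ} (hf : Differentiable ℂ f) {c : ℂ} (hc : ‖c‖ = 1)
    (n : ℕ) : ‖heCoeff (fun z => f (c * z)) n‖ = ‖heCoeff f n‖ := by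
  rw [heCoeff_comp_const_mul hf, norm_mul, norm_pow, hc, one_pow, one_mul]

lemma heInner_comp_const_mul (ξ : ℕ → ℝ) {f g : ℂ → ℂ} (hf : Differentiable ℂ f)
    (hg : Differentiable ℂ g) {c : ℂ} (hc : ‖c‖ = 1) :
    heInner ξ (fun z => f (c * z)) (fun z => g (c * z)) = heInner ξ f g := by
  refine tsum_congr fun n => ?_
  have hcn : c ^ n * conj (c ^ n) = 1 := by
    rw [Complex.mul_conj, Complex.normSq_eq_norm_sq, norm_pow, hc]
    simp
  rw [heCoeff_comp_const_mul hf, heCoeff_comp_const_mul hg, map_mul]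
  linear_combination (heCoeff f n * conj (heCoeff g n) * (ξ n : ℂ) ^ 2) * hcn

lemma isIsometryHE_compOp_const_mul (ξ : ℕ → ℝ) {μ : ℂ} (hμ : ‖μ‖ = 1) :
    IsIsometryHE ξ (compOp (fun z => μ * z)) := by
  refine ⟨fun f hf => ⟨hf.1.comp (differentiable_id.const_mul μ), ?_⟩, fun f hf => ?_⟩
  · simpa only [compOp, Function.comp_def, norm_heCoeff_comp_const_mul hf.1 hμ] using hf.2
  · simp only [heNormSq, compOp, Function.comp_def, norm_heCoeff_comp_const_mul hf.1 hμ]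

lemma norm_eq_one_of_isIsometryHE_compOp_const_mul {ξ : ℕ → ℝ} (hξ : ξ 1 ≠ 0) {μ : ℂ}
    (h : IsIsometryHE ξ (compOp (fun z => μ * z))) : ‖μ‖ = 1 := by
  have hnorm := h.2 (fun z => z) (by simpa using memHE_const_mul_id ξ 1)
  have hid : heNormSq ξ (fun z => z) = ξ 1 ^ 2 := by simpa using heNormSq_const_mul_id ξ 1
  rw [show compOp (fun z => μ * z) (fun z => z) = fun z => μ * z from rfl,
    heNormSq_const_mul_id, hid] at hnorm
  have hsq : ‖μ‖ ^ 2 = 1 := by simpa [hξ] using hnorm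
  exact (pow_eq_one_iff_of_nonneg (norm_nonneg μ) two_ne_zero).mp hsq

lemma IsMIsometryHE.of_heInner_iterate {ξ : ℕ → ℝ} {T : (ℂ → ℂ) → ℂ → ℂ} {m : ℕ} (hm : 0 < m)
    (hT : ∀ f g k, MemHE ξ f → MemHE ξ g → heInner ξ (T^[k] f) (T^[k] g) = heInner ξ f g) :
    IsMIsometryHE ξ T m := by
  intro f g hf hg
  have h := sum_neg_one_pow_mul_choose_mul_pow_mul 1 (heInner ξ f g) m
  simp only [one_pow, one_mul, sub_self, zero_pow hm.ne', zero_mul] at h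
  simpa only [hT f g _ hf hg] using h

lemma isMIsometryHE_compOp_const_mul (ξ : ℕ → ℝ) {μ : ℂ} (hμ : ‖μ‖ = 1) {m : ℕ} (hm : 0 < m) :
    IsMIsometryHE ξ (compOp (fun z => μ * z)) m :=
  .of_heInner_iterate hm fun f g k hf hg => by
    simpa only [compOp_const_mul_iterate] using
      heInner_comp_const_mul ξ hf.1 hg.1 (by rw [norm_pow, hμ, one_pow])

lemma norm_eq_one_of_isMIsometryHE_compOp_const_mul {ξ : ℕ → ℝ} (hξ : ξ 1 ≠ 0) {μ : ℂ} {m : ℕ}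
    (hm : 0 < m) (h : IsMIsometryHE ξ (compOp (fun z => μ * z)) m) : ‖μ‖ = 1 := by
  have hid : MemHE ξ (fun z => z) := by simpa using memHE_const_mul_id ξ 1
  have hiter (k : ℕ) : heInner ξ ((compOp (fun z => μ * z))^[k] (fun z => z))
      ((compOp (fun z => μ * z))^[k] (fun z => z)) = (Complex.normSq μ : ℂ) ^ k * (ξ 1 : ℂ) ^ 2 := by
    rw [compOp_const_mul_iterate, heInner_const_mul_id, Complex.mul_conj, map_pow,
      Complex.ofReal_pow]
  have hsum := h _ _ hid hid
  simp only [hiter, sum_neg_one_pow_mul_choose_mul_pow_mul] at hsum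
  have hnormSq : Complex.normSq μ = 1 := by
    have := (mul_eq_zero.mp hsum).resolve_right (by simpa using hξ)
    exact_mod_cast sub_eq_zero.mp (pow_eq_zero_iff hm.ne' |>.mp this)
  rw [Complex.normSq_eq_norm_sq] at hnormSq
  exact (pow_eq_one_iff_of_nonneg (norm_nonneg μ) two_ne_zero).mp hnormSq

theorem stmt15_general (ξ : ℕ → ℝ) (hξ : HEWeight ξ) (μ : ℂ)
    (Φ : ℂ → ℂ) (hΦ : Φ = fun z => μ * z)
    (m : ℕ) (hm : 0 < m) :
    (IsMIsometryHE ξ (compOp Φ) m ↔ IsIsometryHE ξ (compOp Φ)) ∧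
    (IsMIsometryHE ξ (compOp Φ) m ↔ ‖μ‖ = 1) := by
  subst hΦ
  have hξ1 : ξ 1 ≠ 0 := (hξ.1 1).ne'
  have hmiso : IsMIsometryHE ξ (compOp (fun z => μ * z)) m ↔ ‖μ‖ = 1 :=
    ⟨norm_eq_one_of_isMIsometryHE_compOp_const_mul hξ1 hm,
      fun hμ => isMIsometryHE_compOp_const_mul ξ hμ hm⟩
  have hiso : IsIsometryHE ξ (compOp (fun z => μ * z)) ↔ ‖μ‖ = 1 :=
    ⟨norm_eq_one_of_isIsometryHE_compOp_const_mul hξ1, isIsometryHE_compOp_const_mul ξ⟩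
  exact ⟨hmiso.trans hiso.symm, hmiso⟩

/-- For `μ ≠ 0`, `|μ| ≤ 1`, `Φ(z) = μz` and `m ≥ 1`: `C_Φ` is an `m`-isometry
on `H_E(ξ)` iff it is an isometry, iff `|μ| = 1`. -/
theorem stmt15 (ξ : ℕ → ℝ) (hξ : HEWeight ξ) (μ : ℂ) (hμ0 : μ ≠ 0)
    (hμ : ‖μ‖ ≤ 1) (Φ : ℂ → ℂ) (hΦ : Φ = fun z => μ * z)
    (m : ℕ) (hm : 0 < m) :
    (IsMIsometryHE ξ (compOp Φ) m ↔ IsIsometryHE ξ (compOp Φ)) ∧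
    (IsMIsometryHE ξ (compOp Φ) m ↔ ‖μ‖ = 1) :=
  stmt15_general ξ hξ μ Φ hΦ m hm
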